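/- Let 𝖵 be a functorial L²-subspace of G-systems and let ... → X₂ → X₁ → X₀ be an inverse sequence of probability-preserving G-systems in which every connecting extension π_i: X_{i+1} → X_i is relatively 𝖵-sated. Then the inverse limit X_∞ is 𝖵-sated: for any extension ξ: Y → X_∞, the subspaces L²(μ_∞) ∘ ξ and 𝖵_Y are relatively orthogonal over 𝖵_{X_∞} ∘ ξ. -/

import Mathlib

open scoped InnerProductSpace

open MeasureTheory

/-- A probability-preserving `G`-system on a standard Borel probability space. -/
structure PPSystem (G : Type) [Group G] : Type 1 where
  /-- the underlying point space -/
  X : Type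
  /-- the σ-algebra -/
  mX : MeasurableSpace X
  /-- the space is standard Borel -/
  sb : @StandardBorelSpace X mX
  /-- the invariant probability measure -/
  μ : @Measure X mX
  prob : @IsProbabilityMeasure X mX μ
  /-- the action -/
  T : G → X → X
  hmp : ∀ g, @MeasurePreserving X X mX mX (T g) μ μ
  h1 : T 1 = id
  hmul : ∀ g h : G, T (g * h) = T g ∘ T h

instance {G : Type} [Group G] (S : PPSystem G) : MeasurableSpace S.X := S.mX
instance {G : Type} [Group G] (S : PPSystem G) : StandardBorelSpace S.X := S.sb
instance {G : Type} [Group G] (S : PPSystem G) : IsProbabilityMeasure S.μ := S.prob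

/-- `π` is a factor map (extension) from the `G`-system `Y` onto the `G`-system `X`:
it is measure-preserving and intertwines the actions almost everywhere. -/
def IsFactorMap {G : Type} [Group G] (Y X : PPSystem G) (π : Y.X → X.X) : Prop :=
  MeasurePreserving π Y.μ X.μ ∧ ∀ g : G, ∀ᵐ y ∂Y.μ, π (Y.T g y) = X.T g (π y)

/-- Pulling an `L²` function back along a measure-preserving map, as a linear map. -/
noncomputable def pullback {G : Type} [Group G] (Y X : PPSystem G) (π : Y.X → X.X)
    (hπ : MeasurePreserving π Y.μ X.μ) : Lp ℝ 2 X.μ →ₗ[ℝ] Lp ℝ 2 Y.μ :=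
  Lp.compMeasurePreservingₗ ℝ π hπ

/-- A functorial `L²`-subspace of `G`-systems: an assignment to each system `X` of a closed
subspace `𝖵_X ≤ L²(μ_X)`, such that `𝖵_X ∘ π ⊆ 𝖵_Y` for every factor map `π : Y → X`. -/
structure FunctorialSubspace (G : Type) [Group G] : Type 1 where
  /-- the subspace assigned to each system -/
  V : (X : PPSystem G) → Submodule ℝ (Lp ℝ 2 X.μ)
  closed : ∀ X : PPSystem G, IsClosed (V X : Set (Lp ℝ 2 X.μ))
  mono : ∀ (Y X : PPSystem G) (π : Y.X → X.X) (hπ : IsFactorMap Y X π)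
    (f : Lp ℝ 2 X.μ), f ∈ V X → pullback Y X π hπ.1 f ∈ V Y

/-- `K₁` and `K₂` are relatively orthogonal over `L`: `⟪u, v⟫ = ⟪P_L u, P_L v⟫` for all
`u ∈ K₁`, `v ∈ K₂`.  The orthogonal projection `P_L u` is characterized by `P_L u ∈ L`
together with `u - P_L u ⟂ L`, which is how it is phrased here. -/
def RelOrthOver {E : Type} [NormedAddCommGroup E] [InnerProductSpace ℝ E]
    (K₁ K₂ L : Submodule ℝ E) : Prop :=
  ∀ u ∈ K₁, ∀ v ∈ K₂, ∀ pu ∈ L, ∀ pv ∈ L,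
    (∀ w ∈ L, ⟪u - pu, w⟫_ℝ = 0) → (∀ w ∈ L, ⟪v - pv, w⟫_ℝ = 0) →
    ⟪u, v⟫_ℝ = ⟪pu, pv⟫_ℝ

/-- A system `X` is `𝖵`-sated if for every extension `ξ : Y → X`, the subspaces
`L²(μ_X) ∘ ξ` and `𝖵_Y` of `L²(μ_Y)` are relatively orthogonal over `𝖵_X ∘ ξ`. -/
def IsSated {G : Type} [Group G] (𝕍 : FunctorialSubspace G) (X : PPSystem G) : Prop :=
  ∀ (Y : PPSystem G) (ξ : Y.X → X.X) (hξ : IsFactorMap Y X ξ),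
    RelOrthOver (LinearMap.range (pullback Y X ξ hξ.1)) (𝕍.V Y)
      ((𝕍.V X).map (pullback Y X ξ hξ.1))

/-- An extension `π : X̃ → X` is relatively `𝖵`-sated if for every further extension
`ξ : Y → X̃`, the subspaces `L²(μ_X) ∘ (π ∘ ξ)` and `𝖵_Y` are relatively orthogonal
over `𝖵_{X̃} ∘ ξ`. -/
def IsRelSated {G : Type} [Group G] (𝕍 : FunctorialSubspace G) (Xt X : PPSystem G)
    (π : Xt.X → X.X) (hπ : MeasurePreserving π Xt.μ X.μ) : Prop :=
  ∀ (Y : PPSystem G) (ξ : Y.X → Xt.X) (hξ : IsFactorMap Y Xt ξ),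
    RelOrthOver (LinearMap.range (pullback Y X (π ∘ ξ) (hπ.comp hξ.1))) (𝕍.V Y)
      ((𝕍.V Xt).map (pullback Y Xt ξ hξ.1))

section RelOrthOver

variable {E : Type} [NormedAddCommGroup E] [InnerProductSpace ℝ E]
  {K₁ K₂ L : Submodule ℝ E}

theorem relOrthOver_of_inner_eq_zero (hL : L ≤ K₂)
    (h : ∀ u ∈ K₁, ∀ z ∈ K₂, z ∈ Lᗮ → ⟪u, z⟫_ℝ = 0) : RelOrthOver K₁ K₂ L := by
  intro u hu v hv pu hpu pv hpv hupu hvpv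
  have hv_pv : ⟪u, v - pv⟫_ℝ = 0 :=
    h u hu (v - pv) (K₂.sub_mem hv (hL hpv)) ((Submodule.mem_orthogonal' L _).2 hvpv)
  have hu_pu : ⟪u - pu, pv⟫_ℝ = 0 := hupu pv hpv
  rw [inner_sub_right] at hv_pv
  rw [inner_sub_left] at hu_pu
  linarith

theorem RelOrthOver.inner_eq_zero [L.HasOrthogonalProjection] (h : RelOrthOver K₁ K₂ L)
    {u z : E} (hu : u ∈ K₁) (hz : z ∈ K₂) (hzL : z ∈ Lᗮ) : ⟪u, z⟫_ℝ = 0 := by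
  have := h u hu z hz _ (L.orthogonalProjectionOnto u).2 0 L.zero_mem
    (fun w hw => L.starProjection_inner_eq_zero u w hw)
    (fun w hw => by rw [sub_zero]; exact (Submodule.mem_orthogonal' L z).1 hzL w hw)
  simpa using this

end RelOrthOver

section Pullback

variable {G : Type} [Group G]

theorem continuous_pullback (Y X : PPSystem G) (φ : Y.X → X.X)
    (hφ : MeasurePreserving φ Y.μ X.μ) : Continuous (pullback Y X φ hφ) :=
  (Lp.isometry_compMeasurePreserving hφ).continuous

theorem pullback_comp_apply (Y Z X : PPSystem G) (φ : Y.X → Z.X) (χ : Z.X → X.X)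
    (hφ : MeasurePreserving φ Y.μ Z.μ) (hχ : MeasurePreserving χ Z.μ X.μ)
    (f : Lp ℝ 2 X.μ) :
    pullback Y X (χ ∘ φ) (hχ.comp hφ) f = pullback Y Z φ hφ (pullback Z X χ hχ f) :=
  Lp.compMeasurePreserving_comp_apply f hχ hφ

theorem pullback_congr_ae (Y X : PPSystem G) {φ₁ φ₂ : Y.X → X.X}
    (h₁ : MeasurePreserving φ₁ Y.μ X.μ) (h₂ : MeasurePreserving φ₂ Y.μ X.μ)
    (h : φ₁ =ᵐ[Y.μ] φ₂) (f : Lp ℝ 2 X.μ) :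
    pullback Y X φ₁ h₁ f = pullback Y X φ₂ h₂ f := by
  refine Lp.ext ((Lp.coeFn_compMeasurePreserving f h₁).trans
    (.trans ?_ (Lp.coeFn_compMeasurePreserving f h₂).symm))
  filter_upwards [h] with y hy
  simp only [Function.comp_apply, hy]

theorem IsFactorMap.comp {Y Z X : PPSystem G} {φ : Y.X → Z.X} {χ : Z.X → X.X}
    (hχ : IsFactorMap Z X χ) (hφ : IsFactorMap Y Z φ) : IsFactorMap Y X (χ ∘ φ) := by
  refine ⟨hχ.1.comp hφ.1, fun g => ?_⟩
  filter_upwards [hφ.2 g, hφ.1.quasiMeasurePreserving.ae (hχ.2 g)] with y hφy hχy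
  simp only [Function.comp_apply, hφy, hχy]

theorem isComplete_map_pullback (Y X : PPSystem G) (φ : Y.X → X.X)
    (hφ : MeasurePreserving φ Y.μ X.μ) {V : Submodule ℝ (Lp ℝ 2 X.μ)}
    (hV : IsClosed (V : Set (Lp ℝ 2 X.μ))) :
    IsComplete (V.map (pullback Y X φ hφ) : Set (Lp ℝ 2 Y.μ)) := by
  rw [Submodule.map_coe]
  exact (isComplete_image_iff
    (Lp.isometry_compMeasurePreserving hφ).isUniformInducing).2 hV.isComplete

end Pullback

namespace FunctorialSubspace

variable {G : Type} [Group G] (𝕍 : FunctorialSubspace G)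

theorem map_pullback_le {Y X : PPSystem G} {ξ : Y.X → X.X} (hξ : IsFactorMap Y X ξ) :
    (𝕍.V X).map (pullback Y X ξ hξ.1) ≤ 𝕍.V Y := by
  rintro _ ⟨f, hf, rfl⟩
  exact 𝕍.mono Y X ξ hξ f hf

theorem map_pullback_comp_le {Y Z X : PPSystem G} {φ : Y.X → Z.X} {χ : Z.X → X.X}
    (hφ : IsFactorMap Y Z φ) (hχ : IsFactorMap Z X χ) :
    (𝕍.V X).map (pullback Y X (χ ∘ φ) (hχ.comp hφ).1) ≤
      (𝕍.V Z).map (pullback Y Z φ hφ.1) := by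
  rintro _ ⟨f, hf, rfl⟩
  exact ⟨_, 𝕍.mono Z X χ hχ f hf, (pullback_comp_apply Y Z X φ χ hφ.1 hχ.1 f).symm⟩

instance hasOrthogonalProjection_map_pullback {Y X : PPSystem G} (ξ : Y.X → X.X)
    (hξ : MeasurePreserving ξ Y.μ X.μ) :
    ((𝕍.V X).map (pullback Y X ξ hξ)).HasOrthogonalProjection :=
  haveI := (isComplete_map_pullback Y X ξ hξ (𝕍.closed X)).completeSpace_coe
  inferInstance

end FunctorialSubspace

theorem IsRelSated.inner_pullback_eq_zero {G : Type} [Group G]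
    {𝕍 : FunctorialSubspace G} {Xt X : PPSystem G} {π : Xt.X → X.X}
    {hπ : MeasurePreserving π Xt.μ X.μ} (h : IsRelSated 𝕍 Xt X π hπ) {Y : PPSystem G}
    {ξ : Y.X → Xt.X} (hξ : IsFactorMap Y Xt ξ) {z : Lp ℝ 2 Y.μ} (hz : z ∈ 𝕍.V Y)
    (hzV : z ∈ ((𝕍.V Xt).map (pullback Y Xt ξ hξ.1))ᗮ) (f : Lp ℝ 2 X.μ) :
    ⟪pullback Y X (π ∘ ξ) (hπ.comp hξ.1) f, z⟫_ℝ = 0 :=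
  (h Y ξ hξ).inner_eq_zero ⟨f, rfl⟩ hz hzV

/-- Relative satedness of `X_{m+1} → X_m` makes a `z ∈ 𝖵_Y ⊓ (𝖵_{X_∞} ∘ ξ)ᗮ` orthogonal to
`L²(μ_m) ∘ ψ_m ∘ ξ` for every `m`, and these pull-backs are dense in `L²(μ_∞) ∘ ξ`. -/
theorem invLimit_sated_general {G : Type} [Group G] (𝕍 : FunctorialSubspace G)
    (Xs : ℕ → PPSystem G)
    (π : ∀ i : ℕ, (Xs (i + 1)).X → (Xs i).X)
    (hπ : ∀ i, IsFactorMap (Xs (i + 1)) (Xs i) (π i))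
    (hrel : ∀ i, IsRelSated 𝕍 (Xs (i + 1)) (Xs i) (π i) (hπ i).1)
    (Xinf : PPSystem G) (ψ : ∀ m : ℕ, Xinf.X → (Xs m).X)
    (hψ : ∀ m, IsFactorMap Xinf (Xs m) (ψ m))
    (hcompat : ∀ m, ∀ᵐ x ∂Xinf.μ, ψ m x = π m (ψ (m + 1) x))
    (hdense : Dense (⋃ m : ℕ,
      (LinearMap.range (pullback Xinf (Xs m) (ψ m) (hψ m).1) : Set (Lp ℝ 2 Xinf.μ)))) :
    IsSated 𝕍 Xinf := by
  intro Y ξ hξ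
  refine relOrthOver_of_inner_eq_zero (𝕍.map_pullback_le hξ) ?_
  rintro _ ⟨f, rfl⟩ z hz hzL
  have hstage : ∀ m g,
      ⟪pullback Y Xinf ξ hξ.1 (pullback Xinf (Xs m) (ψ m) (hψ m).1 g), z⟫_ℝ = 0 := by
    intro m g
    have hξ' := (hψ (m + 1)).comp hξ
    rw [← pullback_comp_apply, pullback_congr_ae Y (Xs m) ((hψ m).1.comp hξ.1)
      ((hπ m).1.comp hξ'.1) (hξ.1.quasiMeasurePreserving.ae (hcompat m)) g]
    exact (hrel m).inner_pullback_eq_zero hξ' hz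
      (Submodule.orthogonal_le (𝕍.map_pullback_comp_le hξ (hψ (m + 1))) hzL) g
  have hvanish := Continuous.ext_on hdense
    ((continuous_pullback Y Xinf ξ hξ.1).inner continuous_const) continuous_const
    (by rintro _ ⟨_, ⟨m, rfl⟩, g, rfl⟩; exact hstage m g)
  exact congrFun hvanish f

/-- If every connecting map of an inverse sequence of `G`-systems is relatively `𝖵`-sated,
then the inverse limit (a system with compatible factor maps `ψ_m` onto the `X_m`, such that
`⋃_m L²(μ_m) ∘ ψ_m` is dense in `L²(μ_∞)`) is `𝖵`-sated. -/
theorem invLimit_sated {G : Type} [Group G] [Countable G] (𝕍 : FunctorialSubspace G)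
    (Xs : ℕ → PPSystem G)
    (π : ∀ i : ℕ, (Xs (i + 1)).X → (Xs i).X)
    (hπ : ∀ i, IsFactorMap (Xs (i + 1)) (Xs i) (π i))
    (hrel : ∀ i, IsRelSated 𝕍 (Xs (i + 1)) (Xs i) (π i) (hπ i).1)
    (Xinf : PPSystem G) (ψ : ∀ m : ℕ, Xinf.X → (Xs m).X)
    (hψ : ∀ m, IsFactorMap Xinf (Xs m) (ψ m))
    (hcompat : ∀ m, ∀ᵐ x ∂Xinf.μ, ψ m x = π m (ψ (m + 1) x))
    (hdense : Dense (⋃ m : ℕ,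
      (LinearMap.range (pullback Xinf (Xs m) (ψ m) (hψ m).1) : Set (Lp ℝ 2 Xinf.μ)))) :
    IsSated 𝕍 Xinf :=
  invLimit_sated_general 𝕍 Xs π hπ hrel Xinf ψ hψ hcompat hdense
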